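/- arXiv:2209.10363 — 2 statements merged into one kernel-verified Lean document; each statement's English description precedes it below -/
import Mathlib

section
/- Let r† be a minimizer of the social cost C^SO over r ≥ 0 with Σ_t E[s^t(r†,Θ^t)] > 0 and suppose p ≥ L̄. Assume some r' ≥ 0 satisfies f^No(r') ≥ ξ and let r‡ be the largest r ≥ 0 with f^No(r) ≥ ξ. Assume the set {r ≥ 0 : f^No(r) − Σ_t (V_1^t − p)·E[D_a^t − s^t(r,Θ^t)] ≥ ξ} is nonempty with largest element r*. Then r† ≤ r* ≤ r‡. -/
open MeasureTheory Finset

noncomputable section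

variable {Ω : Type*} [MeasurableSpace Ω] {T : Type*} [Fintype T] {n : ℕ}

/-- Supply at time `t` under capacity `r`: `s^t(r,Θ^t) = min(D_a^t, r·Θ^t)`. -/
def supplyF (Da : T → ℝ) (Θ : T → Ω → ℝ) (r : ℝ) (t : T) (ω : Ω) : ℝ :=
  min (Da t) (r * Θ t ω)

/-- Energy allocated to a user with demand profile `Di`:
`d_i^t(r,Θ^t) = (D_i^t/D_a^t)·s^t(r,Θ^t)`. -/
def allocF (Da : T → ℝ) (Θ : T → Ω → ℝ) (Di : T → ℝ) (r : ℝ) (t : T) (ω : Ω) : ℝ :=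
  Di t / Da t * supplyF Da Θ r t ω

/-- Expected lost fraction `E[1 - s^t(r,Θ^t)/D_a^t]`. -/
def lostFrac (μ : Measure Ω) (Da : T → ℝ) (Θ : T → Ω → ℝ) (r : ℝ) (t : T) : ℝ :=
  ∫ ω, (1 - supplyF Da Θ r t ω / Da t) ∂μ

/-- Cost `CU_i(m)` of a user with demand `Di` and values of lost load `Vi`
who chooses contract item `m`. -/
def CUins (μ : Measure Ω) (Da : T → ℝ) (Θ : T → Ω → ℝ) (p r : ℝ)
    (π V : Fin (n + 1) → T → ℝ) (Di Vi : T → ℝ) (m : Fin (n + 1)) : ℝ :=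
  (∑ t, π m t * Di t) + (∑ t, p * ∫ ω, allocF Da Θ Di r t ω ∂μ)
    + (∑ t, ∫ ω, Vi t * (Di t - allocF Da Θ Di r t ω) ∂μ)
    - ∑ t, ∫ ω, (V m t - p) * (Di t - allocF Da Θ Di r t ω) ∂μ

/-- Cost `CU_i(0)` of a user with demand `Di` and values of lost load `Vi`
who buys no insurance. -/
def CUnoins (μ : Measure Ω) (Da : T → ℝ) (Θ : T → Ω → ℝ) (p r : ℝ)
    (Di Vi : T → ℝ) : ℝ :=
  (∑ t, p * ∫ ω, allocF Da Θ Di r t ω ∂μ)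
    + ∑ t, ∫ ω, Vi t * (Di t - allocF Da Θ Di r t ω) ∂μ

/-- IC condition: `π_k^t − π_m^t = (V_k^t − V_m^t)·E[1 − s^t/D_a^t]` for all `t, k, m`. -/
def ICcond (μ : Measure Ω) (Da : T → ℝ) (Θ : T → Ω → ℝ) (r : ℝ)
    (π V : Fin (n + 1) → T → ℝ) : Prop :=
  ∀ t k m, π k t - π m t = (V k t - V m t) * lostFrac μ Da Θ r t

/-- IR condition: `0 ≤ π_k^t ≤ (V_k^t − p)·E[1 − s^t/D_a^t]` for all `t, k`. -/
def IRcond (μ : Measure Ω) (Da : T → ℝ) (Θ : T → Ω → ℝ) (p r : ℝ)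
    (π V : Fin (n + 1) → T → ℝ) : Prop :=
  ∀ t k, 0 ≤ π k t ∧ π k t ≤ (V k t - p) * lostFrac μ Da Θ r t

/-- Total reimbursement `C_s^t(r,Θ^t) = Σ_k (V_k^t − p)(D_k^t − d_k^t)`. -/
def CsF (Da : T → ℝ) (Θ : T → Ω → ℝ) (D V : Fin (n + 1) → T → ℝ) (p r : ℝ)
    (t : T) (ω : Ω) : ℝ :=
  ∑ k, (V k t - p) * (D k t - allocF Da Θ (D k) r t ω)

/-- The utility's profit `f^Ins(r,π)` under the insurance contract. -/
def fIns (μ : Measure Ω) (Da : T → ℝ) (Θ : T → Ω → ℝ) (D V : Fin (n + 1) → T → ℝ)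
    (p c : ℝ) (r : ℝ) (π : Fin (n + 1) → T → ℝ) : ℝ :=
  (∑ k, ∑ t, π k t * D k t) + (∑ t, p * ∫ ω, supplyF Da Θ r t ω ∂μ) - c * r
    - ∑ t, ∫ ω, CsF Da Θ D V p r t ω ∂μ

/-- The utility's profit `f^No(r)` without insurance. -/
def fNo (μ : Measure Ω) (Da : T → ℝ) (Θ : T → Ω → ℝ) (p c : ℝ) (r : ℝ) : ℝ :=
  (∑ t, p * ∫ ω, supplyF Da Θ r t ω ∂μ) - c * r

/-- The social cost `C^SO(r) = c_r·r + Σ_t E[C_s^t(r,Θ^t)]`. -/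
def CSO (μ : Measure Ω) (Da : T → ℝ) (Θ : T → Ω → ℝ) (D V : Fin (n + 1) → T → ℝ)
    (p c : ℝ) (r : ℝ) : ℝ :=
  c * r + ∑ t, ∫ ω, CsF Da Θ D V p r t ω ∂μ

/-- `g(r) := −Σ_t p·E[s^t] + c_r·r + Σ_t E[C_s^t] + ξ`. -/
def gReg (μ : Measure Ω) (Da : T → ℝ) (Θ : T → Ω → ℝ) (D V : Fin (n + 1) → T → ℝ)
    (p c ξ : ℝ) (r : ℝ) : ℝ :=
  -(∑ t, p * ∫ ω, supplyF Da Θ r t ω ∂μ) + c * r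
    + (∑ t, ∫ ω, CsF Da Θ D V p r t ω ∂μ) + ξ

/-- `f^l(r) = Σ_t Σ_k D_k^t·(V_k^t − V_1^t)·E[1 − s^t/D_a^t]`. -/
def fL (μ : Measure Ω) (Da : T → ℝ) (Θ : T → Ω → ℝ) (D V : Fin (n + 1) → T → ℝ)
    (r : ℝ) : ℝ :=
  ∑ t, ∑ k, D k t * (V k t - V 0 t) * lostFrac μ Da Θ r t

/-- `f^u(r) = Σ_t Σ_k D_k^t·(V_k^t − p)·E[1 − s^t/D_a^t]`. -/
def fU (μ : Measure Ω) (Da : T → ℝ) (Θ : T → Ω → ℝ) (D V : Fin (n + 1) → T → ℝ)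
    (p : ℝ) (r : ℝ) : ℝ :=
  ∑ t, ∑ k, D k t * (V k t - p) * lostFrac μ Da Θ r t

/-- Feasibility for Problem-Ins: `r ≥ 0`, regulated profit `f^Ins(r,π) ≥ ξ`, IC and IR. -/
def InsFeasible (μ : Measure Ω) (Da : T → ℝ) (Θ : T → Ω → ℝ)
    (D V : Fin (n + 1) → T → ℝ) (p c ξ : ℝ) (r : ℝ) (π : Fin (n + 1) → T → ℝ) : Prop :=
  0 ≤ r ∧ ξ ≤ fIns μ Da Θ D V p c r π ∧ ICcond μ Da Θ r π V ∧ IRcond μ Da Θ p r π V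

/-- Optimality for Problem-Ins: feasible and minimizing the total premium
`Σ_k Σ_t π_k^t D_k^t` among all feasible points. -/
def InsOptimal (μ : Measure Ω) (Da : T → ℝ) (Θ : T → Ω → ℝ)
    (D V : Fin (n + 1) → T → ℝ) (p c ξ : ℝ) (r : ℝ) (π : Fin (n + 1) → T → ℝ) : Prop :=
  InsFeasible μ Da Θ D V p c ξ r π ∧
    ∀ r' π', InsFeasible μ Da Θ D V p c ξ r' π' →
      (∑ k, ∑ t, π k t * D k t) ≤ ∑ k, ∑ t, π' k t * D k t


lemma integrable_supplyF (μ : Measure Ω) [IsProbabilityMeasure μ]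
    (Da : T → ℝ) (Θ : T → Ω → ℝ) (hΘmeas : ∀ t, Measurable (Θ t))
    (hΘ01 : ∀ t ω, 0 ≤ Θ t ω ∧ Θ t ω ≤ 1) (r : ℝ) (t : T) :
    Integrable (supplyF Da Θ r t) μ := by
  apply Integrable.mono' (integrable_const (|Da t| + |r|))
  · exact (measurable_const.min ((hΘmeas t).const_mul r)).aestronglyMeasurable
  · refine Filter.Eventually.of_forall fun ω => ?_
    have h1 : |r * Θ t ω| ≤ |r| := by
      rw [abs_mul]
      have hΘa : |Θ t ω| ≤ 1 := abs_le.mpr ⟨by linarith [(hΘ01 t ω).1], (hΘ01 t ω).2⟩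
      exact mul_le_of_le_one_right (abs_nonneg r) hΘa
    simp only [supplyF, Real.norm_eq_abs]
    refine abs_le.mpr ⟨le_min ?_ ?_, ?_⟩
    · have := neg_abs_le (Da t); linarith [abs_nonneg r]
    · have := neg_abs_le (r * Θ t ω); linarith [abs_nonneg (Da t)]
    · have := le_abs_self (Da t)
      calc min (Da t) (r * Θ t ω) ≤ Da t := min_le_left _ _
        _ ≤ |Da t| + |r| := by linarith [abs_nonneg r]

lemma integral_sub_supplyF (μ : Measure Ω) [IsProbabilityMeasure μ]
    (Da : T → ℝ) (Θ : T → Ω → ℝ) (hΘmeas : ∀ t, Measurable (Θ t))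
    (hΘ01 : ∀ t ω, 0 ≤ Θ t ω ∧ Θ t ω ≤ 1) (r : ℝ) (t : T) :
    ∫ ω, (Da t - supplyF Da Θ r t ω) ∂μ = Da t - ∫ ω, supplyF Da Θ r t ω ∂μ := by
  rw [integral_sub (integrable_const _) (integrable_supplyF μ Da Θ hΘmeas hΘ01 r t)]
  simp

/-- if `p ≥ L̄`, then `r† ≤ r* ≤ r‡`. -/
theorem stmt15
    (μ : Measure Ω) [IsProbabilityMeasure μ] [Nonempty T]
    (Θ : T → Ω → ℝ) (hΘmeas : ∀ t, Measurable (Θ t))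
    (hΘ01 : ∀ t ω, 0 ≤ Θ t ω ∧ Θ t ω ≤ 1)
    (D V : Fin (n + 1) → T → ℝ) (hD : ∀ k t, 0 < D k t)
    (hVmono : ∀ t, Monotone fun k => V k t)
    (Da : T → ℝ) (hDa : ∀ t, Da t = ∑ k, D k t)
    (p : ℝ) (hp0 : 0 ≤ p) (hpV : ∀ t, p ≤ V 0 t)
    (c : ℝ) (hc : 0 < c) (ξ : ℝ) (hξ : 0 ≤ ξ)
    (rdag : ℝ) (hrdag0 : 0 ≤ rdag)
    (hrdagmin : ∀ r : ℝ, 0 ≤ r → CSO μ Da Θ D V p c rdag ≤ CSO μ Da Θ D V p c r)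
    (hsdag : 0 < ∑ t, ∫ ω, supplyF Da Θ rdag t ω ∂μ)
    (hp : (ξ + c * rdag +
        ∑ t, V 0 t * (Da t - ∫ ω, supplyF Da Θ rdag t ω ∂μ)) / (∑ t, Da t) ≤ p)
    (hfeas : ∃ r' : ℝ, 0 ≤ r' ∧ ξ ≤ fNo μ Da Θ p c r')
    (rdd : ℝ) (hrdd : IsGreatest {r : ℝ | 0 ≤ r ∧ ξ ≤ fNo μ Da Θ p c r} rdd)
    (rstar : ℝ)
    (hrstar : IsGreatest {r : ℝ | 0 ≤ r ∧ ξ ≤ fNo μ Da Θ p c r -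
        ∑ t, (V 0 t - p) * ∫ ω, (Da t - supplyF Da Θ r t ω) ∂μ} rstar) :
    rdag ≤ rstar ∧ rstar ≤ rdd := by
  have hint := integral_sub_supplyF μ Da Θ hΘmeas hΘ01
  have hDapos : ∀ t, 0 < Da t := fun t => by
    rw [hDa t]; exact Finset.sum_pos (fun k _ => hD k t) Finset.univ_nonempty
  have hsle : ∀ (r : ℝ) (t : T) (ω : Ω), supplyF Da Θ r t ω ≤ Da t :=
    fun r t ω => min_le_left _ _
  constructor
  · -- rdag ≤ rstar
    refine hrstar.2 ⟨hrdag0, ?_⟩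
    have hSDa : 0 < ∑ t, Da t := Finset.sum_pos (fun t _ => hDapos t) Finset.univ_nonempty
    have H : ξ + c * rdag + ∑ t, V 0 t * (Da t - ∫ ω, supplyF Da Θ rdag t ω ∂μ)
        ≤ p * ∑ t, Da t := by
      have := (div_le_iff₀ hSDa).mp hp; linarith
    simp only [fNo]
    have e0 : ∀ t : T, (V 0 t - p) * ∫ ω, (Da t - supplyF Da Θ rdag t ω) ∂μ
        = V 0 t * (Da t - ∫ ω, supplyF Da Θ rdag t ω ∂μ)
          - p * (Da t - ∫ ω, supplyF Da Θ rdag t ω ∂μ) := by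
      intro t; rw [hint rdag t]; ring
    rw [Finset.sum_congr rfl fun t _ => e0 t, Finset.sum_sub_distrib]
    have e2 : (∑ t, p * ∫ ω, supplyF Da Θ rdag t ω ∂μ)
        + ∑ t, p * (Da t - ∫ ω, supplyF Da Θ rdag t ω ∂μ) = p * ∑ t, Da t := by
      rw [← Finset.sum_add_distrib, Finset.mul_sum]
      exact Finset.sum_congr rfl fun t _ => by ring
    linarith [H, e2]
  · -- rstar ≤ rdd
    refine hrdd.2 ⟨hrstar.1.1, ?_⟩
    have hnn : 0 ≤ ∑ t, (V 0 t - p) * ∫ ω, (Da t - supplyF Da Θ rstar t ω) ∂μ := by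
      refine Finset.sum_nonneg fun t _ => mul_nonneg (by linarith [hpV t]) ?_
      refine integral_nonneg fun ω => ?_
      have := hsle rstar t ω
      simp only [Pi.zero_apply]; linarith
    linarith [hrstar.1.2]

end
end

section
/- (Social cost reduction.) Let r† be a minimizer of the social cost C^SO over r ≥ 0 with Σ_t E[s^t(r†,Θ^t)] > 0, assume some r' ≥ 0 satisfies f^No(r') ≥ ξ, and let r‡ be the largest r ≥ 0 with f^No(r) ≥ ξ. If (r*,π*) is an optimal solution of Problem-Ins with f^Ins(r*,π*) = ξ, then the optimal social cost under the insurance contract is no larger than under the no-insurance benchmark: C^SO(r*) ≤ C^SO(r‡). -/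
open MeasureTheory Finset

noncomputable section

variable {Ω : Type*} [MeasurableSpace Ω] {T : Type*} [Fintype T] {n : ℕ}

section Aux

variable (μ : Measure Ω) [IsProbabilityMeasure μ]

lemma supply_meas (Da : T → ℝ) (Θ : T → Ω → ℝ) (h : ∀ t, Measurable (Θ t)) (r : ℝ) (t : T) :
    Measurable (supplyF Da Θ r t) :=
  measurable_const.min ((h t).const_mul r)

lemma supply_nonneg {Da : T → ℝ} {Θ : T → Ω → ℝ} {r : ℝ} {t : T} {ω : Ω}
    (hDa : 0 < Da t) (hΘ : 0 ≤ Θ t ω) (hr : 0 ≤ r) :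
    0 ≤ supplyF Da Θ r t ω :=
  le_min hDa.le (mul_nonneg hr hΘ)

lemma supply_le {Da : T → ℝ} {Θ : T → Ω → ℝ} {r : ℝ} {t : T} {ω : Ω} :
    supplyF Da Θ r t ω ≤ Da t :=
  min_le_left _ _

lemma supply_integrable {Da : T → ℝ} {Θ : T → Ω → ℝ} {r : ℝ} {t : T}
    (hm : ∀ t, Measurable (Θ t)) (hΘ01 : ∀ t ω, 0 ≤ Θ t ω ∧ Θ t ω ≤ 1)
    (hDa : 0 < Da t) (hr : 0 ≤ r) :
    Integrable (supplyF Da Θ r t) μ := by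
  refine (integrable_const (Da t)).mono'
    (supply_meas Da Θ hm r t).aestronglyMeasurable (ae_of_all _ fun ω => ?_)
  rw [Real.norm_eq_abs, abs_le]
  exact ⟨le_trans (by linarith) (supply_nonneg hDa (hΘ01 t ω).1 hr), supply_le⟩

lemma lostFrac_nonneg {Da : T → ℝ} {Θ : T → Ω → ℝ} {r : ℝ} {t : T}
    (hDa : 0 < Da t) :
    0 ≤ lostFrac μ Da Θ r t := by
  refine integral_nonneg fun ω => ?_
  have : supplyF Da Θ r t ω / Da t ≤ 1 := (div_le_one hDa).2 supply_le
  simp only [Pi.zero_apply]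
  linarith

lemma Cs_integral {Da : T → ℝ} {Θ : T → Ω → ℝ} {D V : Fin (n + 1) → T → ℝ}
    {p r : ℝ} {t : T}
    (hm : ∀ t, Measurable (Θ t)) (hΘ01 : ∀ t ω, 0 ≤ Θ t ω ∧ Θ t ω ≤ 1)
    (hDa : 0 < Da t) (hr : 0 ≤ r) :
    ∫ ω, CsF Da Θ D V p r t ω ∂μ
      = ∑ k, (V k t - p) * D k t * lostFrac μ Da Θ r t := by
  unfold CsF
  rw [integral_finset_sum]
  · refine Finset.sum_congr rfl fun k _ => ?_
    have hEq : ∀ ω, (V k t - p) * (D k t - allocF Da Θ (D k) r t ω)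
        = (V k t - p) * D k t * (1 - supplyF Da Θ r t ω / Da t) := by
      intro ω
      unfold allocF
      ring
    simp only [hEq]
    rw [MeasureTheory.integral_const_mul]
    rfl
  · intro k _
    have : Integrable (fun ω => D k t / Da t * supplyF Da Θ r t ω) μ :=
      (supply_integrable μ hm hΘ01 hDa hr).const_mul _
    exact (((integrable_const (D k t)).sub this).const_mul _)

end Aux

/-- social cost reduction: the optimal social cost under the
insurance contract is no larger than under the no-insurance benchmark. -/
theorem stmt16
    (μ : Measure Ω) [IsProbabilityMeasure μ] [Nonempty T]
    (Θ : T → Ω → ℝ) (hΘmeas : ∀ t, Measurable (Θ t))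
    (hΘ01 : ∀ t ω, 0 ≤ Θ t ω ∧ Θ t ω ≤ 1)
    (D V : Fin (n + 1) → T → ℝ) (hD : ∀ k t, 0 < D k t)
    (hVmono : ∀ t, Monotone fun k => V k t)
    (Da : T → ℝ) (hDa : ∀ t, Da t = ∑ k, D k t)
    (p : ℝ) (hp0 : 0 ≤ p) (hpV : ∀ t, p ≤ V 0 t)
    (c : ℝ) (hc : 0 < c) (ξ : ℝ) (hξ : 0 ≤ ξ)
    (rdag : ℝ) (hrdag0 : 0 ≤ rdag)
    (hrdagmin : ∀ r : ℝ, 0 ≤ r → CSO μ Da Θ D V p c rdag ≤ CSO μ Da Θ D V p c r)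
    (hsdag : 0 < ∑ t, ∫ ω, supplyF Da Θ rdag t ω ∂μ)
    (hfeas : ∃ r' : ℝ, 0 ≤ r' ∧ ξ ≤ fNo μ Da Θ p c r')
    (rdd : ℝ) (hrdd : IsGreatest {r : ℝ | 0 ≤ r ∧ ξ ≤ fNo μ Da Θ p c r} rdd)
    (rstar : ℝ) (πstar : Fin (n + 1) → T → ℝ)
    (hopt : InsOptimal μ Da Θ D V p c ξ rstar πstar)
    (hbind : fIns μ Da Θ D V p c rstar πstar = ξ) :
    CSO μ Da Θ D V p c rstar ≤ CSO μ Da Θ D V p c rdd := by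
  classical
  obtain ⟨⟨hr0, hfins, hIC, hIR⟩, hmin⟩ := hopt
  obtain ⟨⟨hrdd0, hfNodd⟩, hub⟩ := hrdd
  have hDapos : ∀ t, 0 < Da t := fun t =>
    (hDa t) ▸ Finset.sum_pos (fun k _ => hD k t) Finset.univ_nonempty
  have hCsI : ∀ r : ℝ, 0 ≤ r → ∀ t : T, ∫ ω, CsF Da Θ D V p r t ω ∂μ
      = ∑ k, (V k t - p) * D k t * lostFrac μ Da Θ r t :=
    fun r hr t => Cs_integral μ hΘmeas hΘ01 (hDapos t) hr
  have hlf : ∀ (r : ℝ) (t : T), 0 ≤ lostFrac μ Da Θ r t :=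
    fun r t => lostFrac_nonneg μ (hDapos t)
  -- total premium of πstar is at most total reimbursement at rstar
  have hVp : ∀ (t : T) (k : Fin (n + 1)), 0 ≤ V k t - p := fun t k =>
    sub_nonneg.2 ((hpV t).trans (hVmono t (Fin.zero_le k)))
  have hPle : ∀ (r : ℝ), 0 ≤ r → ∀ π : Fin (n + 1) → T → ℝ,
      (∀ t k, π k t ≤ (V k t - p) * lostFrac μ Da Θ r t) →
      (∑ k, ∑ t, π k t * D k t) ≤ ∑ t, ∫ ω, CsF Da Θ D V p r t ω ∂μ := by
    intro r hr π hπ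
    rw [Finset.sum_comm]
    refine Finset.sum_le_sum fun t _ => ?_
    rw [hCsI r hr t]
    refine Finset.sum_le_sum fun k _ => ?_
    have := mul_le_mul_of_nonneg_right (hπ t k) (hD k t).le
    calc π k t * D k t ≤ (V k t - p) * lostFrac μ Da Θ r t * D k t := this
      _ = (V k t - p) * D k t * lostFrac μ Da Θ r t := by ring
  have hPstar : (∑ k, ∑ t, πstar k t * D k t) ≤ ∑ t, ∫ ω, CsF Da Θ D V p rstar t ω ∂μ :=
    hPle rstar hr0 πstar (fun t k => (hIR t k).2)
  -- hence fNo rstar ≥ ξ, so rstar ≤ rdd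
  have hfNostar : ξ ≤ fNo μ Da Θ p c rstar := by
    have := hbind
    unfold fIns at this
    unfold fNo
    linarith
  have hrle : rstar ≤ rdd := hub ⟨hr0, hfNostar⟩
  -- the candidate contract at rdd
  set πU : Fin (n + 1) → T → ℝ := fun k t => (V k t - p) * lostFrac μ Da Θ rdd t with hπU
  have hPU : (∑ k, ∑ t, πU k t * D k t) = ∑ t, ∫ ω, CsF Da Θ D V p rdd t ω ∂μ := by
    rw [Finset.sum_comm]
    refine Finset.sum_congr rfl fun t _ => ?_
    rw [hCsI rdd hrdd0 t]
    exact Finset.sum_congr rfl fun k _ => by simp only [hπU]; ring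
  have hfeasU : InsFeasible μ Da Θ D V p c ξ rdd πU := by
    refine ⟨hrdd0, ?_, ?_, ?_⟩
    · unfold fIns
      rw [hPU]
      unfold fNo at hfNodd
      linarith
    · intro t k m
      simp only [hπU]
      ring
    · intro t k
      exact ⟨mul_nonneg (hVp t k) (hlf rdd t), le_refl _⟩
  have hPopt : (∑ k, ∑ t, πstar k t * D k t) ≤ ∑ t, ∫ ω, CsF Da Θ D V p rdd t ω ∂μ := by
    rw [← hPU]
    exact hmin rdd πU hfeasU
  -- monotonicity of expected supply
  have hSmono : (∑ t, p * ∫ ω, supplyF Da Θ rstar t ω ∂μ)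
      ≤ ∑ t, p * ∫ ω, supplyF Da Θ rdd t ω ∂μ := by
    refine Finset.sum_le_sum fun t _ => ?_
    refine mul_le_mul_of_nonneg_left ?_ hp0
    refine integral_mono (supply_integrable μ hΘmeas hΘ01 (hDapos t) hr0)
      (supply_integrable μ hΘmeas hΘ01 (hDapos t) hrdd0) fun ω => ?_
    exact min_le_min le_rfl (mul_le_mul_of_nonneg_right hrle (hΘ01 t ω).1)
  -- fNo rdd ≤ ξ via maximality of rdd
  have hfNoub : fNo μ Da Θ p c rdd ≤ ξ := by
    refine le_of_forall_pos_le_add fun ε hε => ?_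
    set r := rdd + ε / c with hrdef
    have hrgt : rdd < r := by
      have : 0 < ε / c := div_pos hε hc
      rw [hrdef]
      linarith
    have hrnn : 0 ≤ r := le_trans hrdd0 hrgt.le
    have hnot : ¬ (0 ≤ r ∧ ξ ≤ fNo μ Da Θ p c r) := fun h => absurd (hub h) (not_le.2 hrgt)
    have hlt : fNo μ Da Θ p c r < ξ := by
      by_contra h
      exact hnot ⟨hrnn, le_of_not_gt h⟩
    have hmono : (∑ t, p * ∫ ω, supplyF Da Θ rdd t ω ∂μ)
        ≤ ∑ t, p * ∫ ω, supplyF Da Θ r t ω ∂μ := by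
      refine Finset.sum_le_sum fun t _ => ?_
      refine mul_le_mul_of_nonneg_left ?_ hp0
      refine integral_mono (supply_integrable μ hΘmeas hΘ01 (hDapos t) hrdd0)
        (supply_integrable μ hΘmeas hΘ01 (hDapos t) hrnn) fun ω => ?_
      exact min_le_min le_rfl (mul_le_mul_of_nonneg_right hrgt.le (hΘ01 t ω).1)
    unfold fNo at hlt ⊢
    have hcr : c * r = c * rdd + ε := by
      rw [hrdef]
      field_simp
    linarith
  -- conclude
  have hbind' : (∑ k, ∑ t, πstar k t * D k t)
      + (∑ t, p * ∫ ω, supplyF Da Θ rstar t ω ∂μ) - c * rstar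
      - (∑ t, ∫ ω, CsF Da Θ D V p rstar t ω ∂μ) = ξ := hbind
  unfold CSO
  unfold fNo at hfNoub
  linarith


end
end
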